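/- arXiv:1809.07870 — 6 statements merged into one kernel-verified Lean document; each statement's English description precedes it below -/
import Mathlib

section
/- Let Z = c ⊕ G B^r ⊂ ℝ^n be a zonotope, let S = {x ∈ ℝ^n : |ρᵀx − γ| ≤ σ} be a strip with ρ ∈ ℝ^n, γ ∈ ℝ, σ ≥ 0, and let λ ∈ ℝ^n be arbitrary. Define c_I(λ) := c + λ(γ − ρᵀc) and G_I(λ) := [(I_n − λρᵀ)G σλ] ∈ ℝ^{n×(r+1)} (horizontal concatenation). Then Z ∩ S ⊆ c_I(λ) ⊕ G_I(λ) B^{r+1}. -/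
open Matrix

/-- The zonotope with center `c` and generator matrix `G`:
`c ⊕ G B^r = {c + G b : b ∈ [-1,1]^r}`. -/
def zonotope {n : ℕ} {ι : Type*} [Fintype ι] (c : Fin n → ℝ)
    (G : Matrix (Fin n) ι ℝ) : Set (Fin n → ℝ) :=
  {x | ∃ b : ι → ℝ, (∀ j, |b j| ≤ 1) ∧ x = c + G.mulVec b}

lemma exists_abs_le_one_mul_eq {K : Type*} [Field K] [LinearOrder K] [IsStrictOrderedRing K]
    {t σ : K} (ht : |t| ≤ σ) : ∃ w : K, |w| ≤ 1 ∧ σ * w = t := by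
  rcases (abs_nonneg t).trans ht |>.eq_or_lt with hσ | hσ
  · subst hσ
    exact ⟨0, by simp, by rw [mul_zero, eq_comm, ← abs_nonpos_iff]; exact ht⟩
  · refine ⟨t / σ, ?_, mul_div_cancel₀ t hσ.ne'⟩
    rwa [abs_div, abs_of_pos hσ, div_le_one hσ]

lemma one_sub_vecMulVec_mulVec {R : Type*} [CommRing R] {n : Type*} [Fintype n] [DecidableEq n]
    (u v x : n → R) : (1 - vecMulVec u v) *ᵥ x = x - (v ⬝ᵥ x) • u := by
  rw [sub_mulVec, one_mulVec, vecMulVec_mulVec, op_smul_eq_smul]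

lemma mulVec_add_mem_zonotope {m n : ℕ} {ι : Type*} [Fintype ι] {c x : Fin n → ℝ}
    {G : Matrix (Fin n) ι ℝ} (hx : x ∈ zonotope c G) (A : Matrix (Fin m) (Fin n) ℝ)
    (d : Fin m → ℝ) : A *ᵥ x + d ∈ zonotope (A *ᵥ c + d) (A * G) := by
  obtain ⟨b, hb, rfl⟩ := hx
  exact ⟨b, hb, by rw [mulVec_add, mulVec_mulVec]; abel⟩

lemma add_smul_mem_zonotope_fromCols {n : ℕ} {ι : Type*} [Fintype ι] {c x : Fin n → ℝ}
    {G : Matrix (Fin n) ι ℝ} (hx : x ∈ zonotope c G) (v : Fin n → ℝ) {w : ℝ} (hw : |w| ≤ 1) :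
    x + w • v ∈ zonotope c (fromCols G (of fun i (_ : Fin 1) => v i)) := by
  obtain ⟨b, hb, rfl⟩ := hx
  refine ⟨Sum.elim b fun _ => w, fun j => j.rec hb fun _ => hw, ?_⟩
  rw [fromCols_mulVec_sumElim, ← add_assoc]
  congr 1
  ext i
  simp [mulVec, dotProduct, mul_comm]

theorem zonotope_inter_strip_subset_general (n r : ℕ) (c : Fin n → ℝ)
    (G : Matrix (Fin n) (Fin r) ℝ) (ρ : Fin n → ℝ) (γ σ : ℝ)
    (lam : Fin n → ℝ) :
    zonotope c G ∩ {x | |ρ ⬝ᵥ x - γ| ≤ σ} ⊆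
      zonotope (c + (γ - ρ ⬝ᵥ c) • lam)
        (Matrix.fromCols ((1 - Matrix.vecMulVec lam ρ) * G)
          (Matrix.of fun i (_ : Fin 1) => σ * lam i)) := by
  rintro x ⟨hxZ, hxS : |ρ ⬝ᵥ x - γ| ≤ σ⟩
  obtain ⟨w, hw, hσw⟩ := exists_abs_le_one_mul_eq hxS
  -- `x = ((I - λρᵀ) x + γλ) + (ρᵀx - γ) λ`, and the last term `w • σλ` is absorbed
  -- by the new generator `σλ`.
  have hproj := mulVec_add_mem_zonotope hxZ (1 - vecMulVec lam ρ) (γ • lam)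
  convert add_smul_mem_zonotope_fromCols hproj (fun i => σ * lam i) hw using 2
  · rw [one_sub_vecMulVec_mulVec, sub_smul]
    abel
  · rw [one_sub_vecMulVec_mulVec]
    ext i
    simp only [Pi.add_apply, Pi.sub_apply, Pi.smul_apply, smul_eq_mul]
    linear_combination (-lam i) * hσw

/-- Intersection of a zonotope with a strip is contained in the
parametrized zonotope `c_I(λ) ⊕ G_I(λ) B^{r+1}` with
`c_I(λ) = c + λ(γ − ρᵀc)` and `G_I(λ) = [(I − λρᵀ)G  σλ]`. -/
theorem zonotope_inter_strip_subset (n r : ℕ) (c : Fin n → ℝ)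
    (G : Matrix (Fin n) (Fin r) ℝ) (ρ : Fin n → ℝ) (γ σ : ℝ) (hσ : 0 ≤ σ)
    (lam : Fin n → ℝ) :
    zonotope c G ∩ {x | |ρ ⬝ᵥ x - γ| ≤ σ} ⊆
      zonotope (c + (γ - ρ ⬝ᵥ c) • lam)
        (Matrix.fromCols ((1 - Matrix.vecMulVec lam ρ) * G)
          (Matrix.of fun i (_ : Fin 1) => σ * lam i)) :=
  zonotope_inter_strip_subset_general n r c G ρ γ σ lam
end

section
/- Let G ∈ ℝ^{n×r}, ρ ∈ ℝ^n and σ ∈ ℝ with ρᵀG Gᵀρ + σ² > 0. For λ ∈ ℝ^n define G_I(λ) := [(I_n − λρᵀ)G σλ] ∈ ℝ^{n×(r+1)}. Then the choice λ* = (G Gᵀ ρ)/(ρᵀ G Gᵀ ρ + σ²) minimizes the Frobenius norm of G_I(λ): for every λ ∈ ℝ^n, ‖G_I(λ*)‖_F ≤ ‖G_I(λ)‖_F. -/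
open Matrix

/-- The Frobenius norm of a real matrix. -/
noncomputable def frobNorm {ι κ : Type*} [Fintype ι] [Fintype κ]
    (M : Matrix ι κ ℝ) : ℝ :=
  Real.sqrt (∑ i, ∑ j, (M i j) ^ 2)

/-- The generator matrix `G_I(λ) = [(I − λρᵀ)G  σλ]` of the intersection zonotope. -/
def GI {n r : ℕ} (G : Matrix (Fin n) (Fin r) ℝ) (ρ : Fin n → ℝ) (σ : ℝ)
    (lam : Fin n → ℝ) : Matrix (Fin n) (Fin r ⊕ Fin 1) ℝ :=
  Matrix.fromCols ((1 - Matrix.vecMulVec lam ρ) * G)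
    (Matrix.of fun i (_ : Fin 1) => σ * lam i)

/-!
`‖G_I(λ)‖_F²` splits into a sum over rows, and row `i` involves only `λ_i`: with
`t = Gᵀρ`, its squared norm is the quadratic
`‖G_i‖² − 2 λ_i ⟨G_i, t⟩ + λ_i² (‖t‖² + σ²)`, whose leading coefficient is
`ρᵀGGᵀρ + σ² > 0`. Each such quadratic is minimized at `λ_i = ⟨G_i, t⟩ / (‖t‖² + σ²)`,
which is the `i`-th entry of `λ*`.
-/

theorem quadratic_le_at_inv_mul {a : ℝ} (b x : ℝ) (ha : 0 < a) :
    a * (a⁻¹ * b) ^ 2 - 2 * b * (a⁻¹ * b) ≤ a * x ^ 2 - 2 * b * x := by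
  have hdiff : a * x ^ 2 - 2 * b * x - (a * (a⁻¹ * b) ^ 2 - 2 * b * (a⁻¹ * b)) =
      (a * x - b) ^ 2 / a := by
    field_simp
    ring
  have := div_nonneg (sq_nonneg (a * x - b)) ha.le
  linarith

theorem sum_sub_mul_sq {κ : Type*} [Fintype κ] (u t : κ → ℝ) (μ : ℝ) :
    ∑ j, (u j - μ * t j) ^ 2 = u ⬝ᵥ u - 2 * μ * (u ⬝ᵥ t) + μ ^ 2 * (t ⬝ᵥ t) := by
  simp only [dotProduct, Finset.mul_sum, ← Finset.sum_sub_distrib, ← Finset.sum_add_distrib]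
  exact Finset.sum_congr rfl fun j _ => by ring

theorem frobNorm_le_of_row_le {ι κ : Type*} [Fintype ι] [Fintype κ] {M N : Matrix ι κ ℝ}
    (h : ∀ i, ∑ j, M i j ^ 2 ≤ ∑ j, N i j ^ 2) : frobNorm M ≤ frobNorm N :=
  Real.sqrt_le_sqrt (Finset.sum_le_sum fun i _ => h i)

theorem GI_row_sum_sq {n r : ℕ} (G : Matrix (Fin n) (Fin r) ℝ) (ρ : Fin n → ℝ) (σ : ℝ)
    (lam : Fin n → ℝ) (i : Fin n) :
    ∑ j, GI G ρ σ lam i j ^ 2 =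
      G i ⬝ᵥ G i - 2 * lam i * ((G * Gᵀ) *ᵥ ρ) i +
        lam i ^ 2 * (ρ ⬝ᵥ (G * Gᵀ) *ᵥ ρ + σ ^ 2) := by
  have hleft : (1 - vecMulVec lam ρ) * G = G - vecMulVec lam (Gᵀ *ᵥ ρ) := by
    rw [Matrix.sub_mul, Matrix.one_mul, vecMulVec_mul, mulVec_transpose]
  have hcross : G i ⬝ᵥ (Gᵀ *ᵥ ρ) = ((G * Gᵀ) *ᵥ ρ) i := by
    rw [← mulVec_mulVec]
    rfl
  have hgram : (Gᵀ *ᵥ ρ) ⬝ᵥ (Gᵀ *ᵥ ρ) = ρ ⬝ᵥ (G * Gᵀ) *ᵥ ρ := by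
    rw [← mulVec_mulVec, dotProduct_mulVec, vecMul_transpose, dotProduct_comm]
  simp only [GI, Fintype.sum_sum_type, fromCols_apply_inl, fromCols_apply_inr, of_apply,
    hleft, Matrix.sub_apply, vecMulVec_apply, Finset.univ_unique, Finset.sum_singleton]
  rw [sum_sub_mul_sq (G i) (Gᵀ *ᵥ ρ), hcross, hgram]
  ring

/-- The choice `λ* = (G Gᵀ ρ)/(ρᵀ G Gᵀ ρ + σ²)` minimizes the Frobenius norm of
`G_I(λ)`. -/
theorem GI_frobNorm_min (n r : ℕ) (G : Matrix (Fin n) (Fin r) ℝ)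
    (ρ : Fin n → ℝ) (σ : ℝ)
    (hpos : ρ ⬝ᵥ (G * Gᵀ).mulVec ρ + σ ^ 2 > 0) :
    ∀ lam : Fin n → ℝ,
      frobNorm (GI G ρ σ ((ρ ⬝ᵥ (G * Gᵀ).mulVec ρ + σ ^ 2)⁻¹ • (G * Gᵀ).mulVec ρ)) ≤
        frobNorm (GI G ρ σ lam) := by
  intro lam
  refine frobNorm_le_of_row_le fun i => ?_
  rw [GI_row_sum_sq, GI_row_sum_sq, Pi.smul_apply, smul_eq_mul]
  linarith [quadratic_le_at_inv_mul (((G * Gᵀ) *ᵥ ρ) i) (lam i) hpos]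
end

section
/- (Generalization of Kühn's method, concrete form.) Let f : ℝ^{n} × ℝ^{m} → ℝ^{n} be such that x ↦ f(x,w) is continuously differentiable for each w. Let X = c_x ⊕ G_x B^{r_x} ⊂ ℝ^n be a zonotope and W ⊆ ℝ^m a set. Suppose: (i) there is a zonotope Z_q = c_q ⊕ G_q B^{r_q} with f(c_x, w) ∈ Z_q for all w ∈ W; (ii) there are matrices L, U ∈ ℝ^{n×n} with L ≤ ∂f/∂x (x,w) ≤ U entrywise for all x ∈ X and w ∈ W. Define M̄ := (1/2)(L+U) G_x ∈ ℝ^{n×r_x} and the diagonal matrix H ∈ ℝ^{n×n} with H_{ii} := (1/2) Σ_{j=1}^{r_x} Σ_{k=1}^{n} (U−L)_{ik} |(G_x)_{kj}|. Then for all x ∈ X and w ∈ W, f(x,w) ∈ c_q ⊕ [G_q M̄ H] B^{r_q + r_x + n}. -/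
/-!
Write `x = c_x + G_x b`. Zonotopes are convex, so for each output coordinate `i` the mean value
theorem on the segment `[c_x, x]` gives a point `zᵢ ∈ X` with
`fᵢ(x) - fᵢ(c_x) = (J(zᵢ) G_x b)ᵢ`, where `L ≤ J(zᵢ) ≤ U` (the point depends on `i`, which is why
only entrywise Jacobian bounds enter). Splitting `J(zᵢ) = (L + U)/2 + (J(zᵢ) - (L + U)/2)`, the
first part yields the `M̄ b` term and the second is bounded in absolute value by `Hᵢᵢ`, i.e. lies in
the box generated by `H`. Finally, a Minkowski sum of zonotopes is the zonotope with the
concatenated generators.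
-/

open Matrix

section Zonotope

variable {n : ℕ} {ι κ : Type*} [Fintype ι] [Fintype κ]

theorem center_mem_zonotope (c : Fin n → ℝ) (G : Matrix (Fin n) ι ℝ) : c ∈ zonotope c G :=
  ⟨0, fun j => by simp, by simp⟩

theorem mulVec_mem_zonotope_zero {G : Matrix (Fin n) ι ℝ} {b : ι → ℝ} (hb : ∀ j, |b j| ≤ 1) :
    G *ᵥ b ∈ zonotope 0 G :=
  ⟨b, hb, by simp⟩

theorem convex_zonotope (c : Fin n → ℝ) (G : Matrix (Fin n) ι ℝ) :
    Convex ℝ (zonotope c G) := by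
  rintro _ ⟨b, hb, rfl⟩ _ ⟨b', hb', rfl⟩ s t hs ht hst
  refine ⟨s • b + t • b', fun j => ?_, ?_⟩
  · calc |s * b j + t * b' j| ≤ s * |b j| + t * |b' j| := by
          simpa [abs_mul, abs_of_nonneg hs, abs_of_nonneg ht] using abs_add_le (s * b j) (t * b' j)
      _ ≤ s * 1 + t * 1 := by gcongr <;> simp_all
      _ = 1 := by linarith
  · rw [mulVec_add, mulVec_smul, mulVec_smul, smul_add, smul_add, add_add_add_comm,
      ← add_smul, hst, one_smul]

theorem add_mem_zonotope_fromCols {c c' x y : Fin n → ℝ} {G : Matrix (Fin n) ι ℝ}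
    {G' : Matrix (Fin n) κ ℝ} (hx : x ∈ zonotope c G) (hy : y ∈ zonotope c' G') :
    x + y ∈ zonotope (c + c') (fromCols G G') := by
  obtain ⟨b, hb, rfl⟩ := hx
  obtain ⟨b', hb', rfl⟩ := hy
  refine ⟨Sum.elim b b', fun j => ?_, ?_⟩
  · cases j <;> simp [hb, hb']
  · rw [fromCols_mulVec_sumElim]
    abel

theorem mem_zonotope_zero_diagonal {h s : Fin n → ℝ} (hs : ∀ i, |s i| ≤ h i) :
    s ∈ zonotope 0 (diagonal h) := by
  refine ⟨fun i => s i / h i, fun i => ?_, ?_⟩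
  · rw [abs_div]
    exact div_le_one_of_le₀ ((hs i).trans (le_abs_self _)) (abs_nonneg _)
  · ext i
    rcases (abs_nonneg (s i)).trans (hs i) |>.eq_or_lt with h0 | hpos
    · simp [mulVec_diagonal, ← h0, abs_nonpos_iff.mp (h0 ▸ hs i)]
    · simp [mulVec_diagonal, mul_div_cancel₀ _ hpos.ne']

end Zonotope

theorem exists_mem_segment_sub_apply_eq_fderiv {E ι : Type*} [NormedAddCommGroup E]
    [NormedSpace ℝ E] [Fintype ι] {F : E → ι → ℝ} (hF : Differentiable ℝ F) (x y : E) (i : ι) :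
    ∃ z ∈ segment ℝ x y, F y i - F x i = fderiv ℝ F z (y - x) i :=
  domain_mvt (f := fun x => F x i) (s := Set.univ)
    (f' := fun z => (ContinuousLinearMap.proj i).comp (fderiv ℝ F z))
    (fun z _ => ((ContinuousLinearMap.proj (R := ℝ) (φ := fun _ : ι => ℝ) i).hasFDerivAt.comp z
      (hF z).hasFDerivAt).hasFDerivWithinAt)
    convex_univ trivial trivial

theorem abs_mulVec_apply_le_sum_abs {m ι : Type*} [Fintype ι] {G : Matrix m ι ℝ} {b : ι → ℝ}
    (hb : ∀ j, |b j| ≤ 1) (k : m) : |(G *ᵥ b) k| ≤ ∑ j, |G k j| :=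
  calc |∑ j, G k j * b j| ≤ ∑ j, |G k j * b j| := Finset.abs_sum_le_sum_abs _ _
    _ ≤ ∑ j, |G k j| := Finset.sum_le_sum fun j _ => by
        rw [abs_mul]; exact mul_le_of_le_one_right (abs_nonneg _) (hb j)

theorem abs_mulVec_mulVec_sub_midpoint_le {m ι : Type*} [Fintype m] [Fintype ι]
    {J L U : Matrix m m ℝ} {G : Matrix m ι ℝ} {b : ι → ℝ} {i : m}
    (hL : ∀ k, L i k ≤ J i k) (hU : ∀ k, J i k ≤ U i k) (hb : ∀ j, |b j| ≤ 1) :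
    |(J *ᵥ (G *ᵥ b)) i - (((1 / 2 : ℝ) • ((L + U) * G)) *ᵥ b) i| ≤
      1 / 2 * ∑ j, ∑ k, (U - L) i k * |G k j| := by
  have hrow : (J *ᵥ (G *ᵥ b)) i - (((1 / 2 : ℝ) • ((L + U) * G)) *ᵥ b) i =
      ∑ k, (J i k - (L i k + U i k) / 2) * (G *ᵥ b) k := by
    rw [← Matrix.smul_mul, ← mulVec_mulVec, ← Pi.sub_apply, ← sub_mulVec]
    exact Finset.sum_congr rfl fun k _ => by
      simp only [Matrix.sub_apply, Matrix.smul_apply, Matrix.add_apply, smul_eq_mul]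
      ring
  rw [hrow]
  calc |∑ k, (J i k - (L i k + U i k) / 2) * (G *ᵥ b) k|
      ≤ ∑ k, |(J i k - (L i k + U i k) / 2) * (G *ᵥ b) k| := Finset.abs_sum_le_sum_abs _ _
    _ ≤ ∑ k, (U i k - L i k) / 2 * ∑ j, |G k j| := Finset.sum_le_sum fun k _ => by
        rw [abs_mul]
        gcongr
        · linarith [hL k, hU k]
        · exact abs_le.mpr ⟨by linarith [hL k], by linarith [hU k]⟩
        · exact abs_mulVec_apply_le_sum_abs hb k
    _ = 1 / 2 * ∑ j, ∑ k, (U - L) i k * |G k j| := by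
        simp only [Finset.sum_comm (γ := ι), Matrix.sub_apply, ← Finset.mul_sum]
        rw [Finset.mul_sum]
        exact Finset.sum_congr rfl fun k _ => by ring

/-- Generalization of Kühn's method: if `f(c_x, W) ⊆ c_q ⊕ G_q B^{r_q}` and the
Jacobian `∂f/∂x` is bounded entrywise by `L ≤ ∂f/∂x ≤ U` on `X × W`, then
`f(X, W) ⊆ c_q ⊕ [G_q  M̄  H] B^{r_q + r_x + n}`, where `M̄ = (1/2)(L+U)G_x` and
`H` is diagonal with `H_{ii} = (1/2) Σ_j Σ_k (U−L)_{ik} |(G_x)_{kj}|`. -/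
theorem kuhn_generalization (n m rx rq : ℕ)
    (f : (Fin n → ℝ) → (Fin m → ℝ) → (Fin n → ℝ))
    (cx : Fin n → ℝ) (Gx : Matrix (Fin n) (Fin rx) ℝ)
    (W : Set (Fin m → ℝ))
    (cq : Fin n → ℝ) (Gq : Matrix (Fin n) (Fin rq) ℝ)
    (L U : Matrix (Fin n) (Fin n) ℝ)
    (hdiff : ∀ w ∈ W, ContDiff ℝ 1 (fun x => f x w))
    (hq : ∀ w ∈ W, f cx w ∈ zonotope cq Gq)
    (hJ : ∀ w ∈ W, ∀ x ∈ zonotope cx Gx, ∀ i k,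
      L i k ≤ fderiv ℝ (fun x => f x w) x (Pi.single k 1) i ∧
      fderiv ℝ (fun x => f x w) x (Pi.single k 1) i ≤ U i k) :
    ∀ x ∈ zonotope cx Gx, ∀ w ∈ W,
      f x w ∈ zonotope cq
        (Matrix.fromCols Gq (Matrix.fromCols ((1 / 2 : ℝ) • ((L + U) * Gx))
          (Matrix.diagonal fun i => (1 / 2 : ℝ) * ∑ j, ∑ k, (U - L) i k * |Gx k j|))) := by
  rintro x hx w hw
  obtain ⟨b, hb, rfl⟩ := hx
  have hF : Differentiable ℝ (fun x => f x w) := (hdiff w hw).differentiable one_ne_zero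
  have hremainder : ∀ i,
      |(f (cx + Gx *ᵥ b) w - f cx w - ((1 / 2 : ℝ) • ((L + U) * Gx)) *ᵥ b) i|
      ≤ 1 / 2 * ∑ j, ∑ k, (U - L) i k * |Gx k j| := by
    intro i
    obtain ⟨z, hz, hmvt⟩ := exists_mem_segment_sub_apply_eq_fderiv hF cx (cx + Gx *ᵥ b) i
    have hzX : z ∈ zonotope cx Gx := (convex_zonotope cx Gx).segment_subset
      (center_mem_zonotope cx Gx) ⟨b, hb, rfl⟩ hz
    rw [Pi.sub_apply, Pi.sub_apply, hmvt, add_sub_cancel_left]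
    simpa only [LinearMap.toMatrix'_mulVec, ContinuousLinearMap.coe_coe] using
      abs_mulVec_mulVec_sub_midpoint_le
        (J := LinearMap.toMatrix' (fderiv ℝ (fun x => f x w) z : (Fin n → ℝ) →ₗ[ℝ] Fin n → ℝ))
        (fun k => (hJ w hw z hzX i k).1) (fun k => (hJ w hw z hzX i k).2) hb
  have hmem := add_mem_zonotope_fromCols (hq w hw) (add_mem_zonotope_fromCols
    (mulVec_mem_zonotope_zero (G := (1 / 2 : ℝ) • ((L + U) * Gx)) hb)
    (mem_zonotope_zero_diagonal hremainder))
  rw [add_zero, add_zero] at hmem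
  convert hmem using 1
  abel
end

section
/- (Zonotope inclusion.) Let c ∈ ℝ^n and let G_L, G_U ∈ ℝ^{n×r} with G_L ≤ G_U entrywise. Define the family of zonotopes Ẑ := {c + G b : G ∈ ℝ^{n×r}, G_L ≤ G ≤ G_U entrywise, b ∈ B^r}, the midpoint matrix G_mid := (1/2)(G_L + G_U), and the diagonal matrix H ∈ ℝ^{n×n} with H_{ii} := (1/2) Σ_{j=1}^{r} (G_U − G_L)_{ij}. Then Ẑ ⊆ c ⊕ [G_mid H] B^{n+r}, i.e., for every G with G_L ≤ G ≤ G_U and every b ∈ B^r there exists b' ∈ B^{n+r} with c + G b = c + [G_mid H] b'. -/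
/-!
Write `G = G_mid + (G - G_mid)`. The first part is reproduced by the `G_mid` block with the
same coefficients `b`. Since `|G_ij - (G_mid)_ij| ≤ (G_U - G_L)_ij / 2`, the `i`-th entry of
`(G - G_mid) b` has absolute value at most `H_ii`, so it is `H_ii` times a coefficient in `[-1, 1]`.
-/

open Matrix

variable {m ι : Type*} [Fintype ι]

theorem abs_sub_midpoint_le_half_sub {lo g hi : ℝ} (hlo : lo ≤ g) (hhi : g ≤ hi) :
    |g - (1 / 2 : ℝ) * (lo + hi)| ≤ (1 / 2 : ℝ) * (hi - lo) := by
  rw [abs_le]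
  constructor <;> linarith

theorem abs_sub_midpoint_mulVec_le {Glo Gup G : Matrix m ι ℝ}
    (hGlo : ∀ i j, Glo i j ≤ G i j) (hGup : ∀ i j, G i j ≤ Gup i j)
    {b : ι → ℝ} (hb : ∀ j, |b j| ≤ 1) (i : m) :
    |((G - (1 / 2 : ℝ) • (Glo + Gup)) *ᵥ b) i| ≤ (1 / 2 : ℝ) * ∑ j, (Gup - Glo) i j := by
  rw [Finset.mul_sum]
  refine (Finset.abs_sum_le_sum_abs _ _).trans (Finset.sum_le_sum fun j _ => ?_)
  have hmid := abs_sub_midpoint_le_half_sub (hGlo i j) (hGup i j)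
  rw [abs_mul]
  refine (mul_le_of_le_one_right (abs_nonneg _) (hb j)).trans ?_
  simpa only [Matrix.sub_apply, Matrix.smul_apply, Matrix.add_apply, smul_eq_mul] using hmid

theorem exists_abs_le_one_diagonal_mulVec_eq [Fintype m] [DecidableEq m] {h d : m → ℝ}
    (hd : ∀ i, |d i| ≤ h i) : ∃ t : m → ℝ, (∀ i, |t i| ≤ 1) ∧ diagonal h *ᵥ t = d := by
  -- Where `h i = 0`, the junk value `d i / 0 = 0` is right, since then `d i = 0` as well.
  refine ⟨fun i => d i / h i, fun i => ?_, funext fun i => ?_⟩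
  · rw [abs_div, abs_of_nonneg ((abs_nonneg _).trans (hd i))]
    exact div_le_one_of_le₀ (hd i) ((abs_nonneg _).trans (hd i))
  · rw [mulVec_diagonal]
    rcases eq_or_ne (h i) 0 with h0 | h0
    · simp [h0, abs_nonpos_iff.mp ((hd i).trans_eq h0)]
    · exact mul_div_cancel₀ _ h0

theorem zonotope_inclusion_general (n r : ℕ) (c : Fin n → ℝ)
    (Glo Gup : Matrix (Fin n) (Fin r) ℝ)
    (G : Matrix (Fin n) (Fin r) ℝ)
    (hGlo : ∀ i j, Glo i j ≤ G i j) (hGup : ∀ i j, G i j ≤ Gup i j)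
    (b : Fin r → ℝ) (hb : ∀ j, |b j| ≤ 1) :
    ∃ b' : (Fin r ⊕ Fin n) → ℝ, (∀ j, |b' j| ≤ 1) ∧
      c + G.mulVec b =
        c + (Matrix.fromCols ((1 / 2 : ℝ) • (Glo + Gup))
          (Matrix.diagonal fun i => (1 / 2 : ℝ) * ∑ j, (Gup - Glo) i j)).mulVec b' := by
  obtain ⟨t, ht, hHt⟩ := exists_abs_le_one_diagonal_mulVec_eq
    (abs_sub_midpoint_mulVec_le hGlo hGup hb)
  refine ⟨Sum.elim b t, Sum.forall.2 ⟨hb, ht⟩, ?_⟩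
  rw [fromCols_mulVec_sumElim, hHt, sub_mulVec, add_sub_cancel]

/-- Zonotope inclusion: the family of zonotopes `{c + Gb : G_L ≤ G ≤ G_U, b ∈ B^r}`
is contained in the zonotope `c ⊕ [G_mid  H] B^{n+r}`, where
`G_mid = (1/2)(G_L + G_U)` and `H` is diagonal with
`H_{ii} = (1/2) Σ_j (G_U − G_L)_{ij}`. -/
theorem zonotope_inclusion (n r : ℕ) (c : Fin n → ℝ)
    (Glo Gup : Matrix (Fin n) (Fin r) ℝ) (hLU : ∀ i j, Glo i j ≤ Gup i j)
    (G : Matrix (Fin n) (Fin r) ℝ)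
    (hGlo : ∀ i j, Glo i j ≤ G i j) (hGup : ∀ i j, G i j ≤ Gup i j)
    (b : Fin r → ℝ) (hb : ∀ j, |b j| ≤ 1) :
    ∃ b' : (Fin r ⊕ Fin n) → ℝ, (∀ j, |b' j| ≤ 1) ∧
      c + G.mulVec b =
        c + (Matrix.fromCols ((1 / 2 : ℝ) • (Glo + Gup))
          (Matrix.diagonal fun i => (1 / 2 : ℝ) * ∑ j, (Gup - Glo) i j)).mulVec b' :=
  zonotope_inclusion_general n r c Glo Gup G hGlo hGup b hb
end

section
/- (Lyapunov characterization of the half-plane LMI region.) Let A ∈ ℝ^{n×n} and ε ∈ ℝ. All eigenvalues λ ∈ ℂ of A satisfy Re λ > ε if and only if there exists a symmetric positive definite matrix T ∈ ℝ^{n×n} such that T Aᵀ + A T − 2ε T is positive definite. -/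
/-!
With `B = A - ε • 1` one has `T Bᵀ + B T = T Aᵀ + A T - 2εT`, so this is Lyapunov's theorem
for `B`. If `T` and `B T + T Bᵀ` are positive definite, evaluating the second form at a left
eigenvector of `B` for `μ` gives `2 Re μ` times the (positive) value of the first.

Conversely, if the spectrum of `B` lies in the open right half-plane, then so does that of
`C t = (1 - t) • 1 + t • B` for `t ∈ [0, 1]`, and by Sylvester's theorem `X ↦ C t X + X (C t)ᵀ`
is invertible. Its solutions `T t` of `C t T + T (C t)ᵀ = 1` form a continuous path of
symmetric matrices starting at `T 0 = 1 / 2`, and none of them is singular, since `T x = 0`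
forces `xᵀ x = 0`. Such a path cannot leave the positive definite cone, so `T 1` is positive
definite.
-/

open Matrix Polynomial Set
open scoped ComplexOrder Pointwise

theorem SemiconjBy.aeval {R A : Type*} [CommSemiring R] [Semiring A] [Algebra R A] {x a b : A}
    (h : SemiconjBy x a b) (p : R[X]) : SemiconjBy x (aeval a p) (aeval b p) := by
  induction p using Polynomial.induction_on' with
  | add p q hp hq => simpa only [map_add] using hp.add_right hq
  | monomial k r =>
    simpa only [aeval_monomial] using
      SemiconjBy.mul_right (Algebra.commute_algebraMap_right r x) (h.pow_right k)

theorem spectrum.re_pos_of_mem_segment {A : Type*} [Ring A] [Algebra ℂ A] {a : A}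
    (ha : ∀ μ ∈ spectrum ℂ a, 0 < μ.re) {t : ℝ} (ht : t ∈ Icc (0 : ℝ) 1) {μ : ℂ}
    (hμ : μ ∈ spectrum ℂ (algebraMap ℂ A (1 - t) + (t : ℂ) • a)) : 0 < μ.re := by
  cases subsingleton_or_nontrivial A
  · simp [spectrum.of_subsingleton] at hμ
  rw [← spectrum.singleton_add_eq, Set.singleton_add, Set.mem_image] at hμ
  obtain ⟨ν, hν, rfl⟩ := hμ
  rcases ht.1.eq_or_lt with rfl | htpos
  · rw [Complex.ofReal_zero, zero_smul, spectrum.zero_eq, Set.mem_singleton_iff] at hν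
    simp [hν]
  · have hsmul := spectrum.unit_smul_eq_smul a (Units.mk0 (t : ℂ) (by exact_mod_cast htpos.ne'))
    rw [Units.smul_def, Units.smul_def, Units.val_mk0] at hsmul
    rw [hsmul, Set.mem_smul_set] at hν
    obtain ⟨ν, hν, rfl⟩ := hν
    simp only [Complex.add_re, Complex.sub_re, Complex.one_re, Complex.ofReal_re, smul_eq_mul,
      Complex.re_ofReal_mul]
    nlinarith [ha ν hν, ht.2]

theorem exists_continuousOn_apply_eq {𝕜 X E : Type*} [NontriviallyNormedField 𝕜]
    [TopologicalSpace X] [NormedAddCommGroup E] [NormedSpace 𝕜 E] [CompleteSpace E]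
    {f : X → E →L[𝕜] E} {s : Set X} (hf : ContinuousOn f s) (hunit : ∀ t ∈ s, IsUnit (f t))
    (y : E) : ∃ x : X → E, ContinuousOn x s ∧ ∀ t ∈ s, f t (x t) = y := by
  refine ⟨fun t => Ring.inverse (f t) y, fun t ht => ?_, fun t ht => ?_⟩
  · have hinv := NormedRing.inverse_continuousAt (hunit t ht).unit
    rw [IsUnit.unit_spec] at hinv
    exact (hinv.comp_continuousWithinAt (hf t ht)).clm_apply continuousWithinAt_const
  · change (f t * Ring.inverse (f t)) y = y
    rw [Ring.mul_inverse_cancel _ (hunit t ht), one_apply_eq_self]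

namespace Matrix

section Sylvester

variable {ι : Type*} [Fintype ι] [DecidableEq ι] {K : Type*} [Field K]

theorem spectrum_transpose (M : Matrix ι ι K) : spectrum K Mᵀ = spectrum K M := by
  ext μ
  simp only [mem_spectrum_iff_isRoot_charpoly, charpoly_transpose]

theorem eq_zero_of_mul_eq_mul_of_disjoint_spectrum [IsAlgClosed K] {C D X : Matrix ι ι K}
    (hCD : Disjoint (spectrum K C) (spectrum K D)) (h : C * X = X * D) : X = 0 := by
  obtain ⟨u, v, huv⟩ : IsCoprime C.charpoly D.charpoly := by
    refine (isCoprime_iff_aeval_ne_zero_of_isAlgClosed K K _ _).2 fun μ => ?_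
    simp only [coe_aeval_eq_eval, ← IsRoot.def, ← mem_spectrum_iff_isRoot_charpoly, ← not_and_or]
    exact fun hμ => Set.disjoint_left.mp hCD hμ.1 hμ.2
  have hX : SemiconjBy X D C := h.symm
  calc X = aeval C (u * C.charpoly + v * D.charpoly) * X := by rw [huv, map_one, one_mul]
    _ = aeval C v * (aeval C D.charpoly * X) := by
      simp only [map_add, map_mul, aeval_self_charpoly, mul_zero, zero_add, mul_assoc]
    _ = aeval C v * (X * aeval D D.charpoly) := by rw [(hX.aeval _).eq]
    _ = 0 := by simp [aeval_self_charpoly]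

end Sylvester

section LyapunovMap

variable {ι : Type*} [Fintype ι] (R : Type*) [CommRing R]

def lyapunovMap : Matrix ι ι R →ₗ[R] Matrix ι ι R →ₗ[R] Matrix ι ι R :=
  LinearMap.mk₂ R (fun C X => C * X + X * Cᵀ)
    (fun C C' X => by simp only [add_mul, mul_add, transpose_add]; abel)
    (fun c C X => by simp only [Matrix.smul_mul, Matrix.mul_smul, transpose_smul, smul_add])
    (fun C X X' => by simp only [add_mul, mul_add]; abel)
    (fun c C X => by simp only [Matrix.mul_smul, Matrix.smul_mul, smul_add])

variable {R}

@[simp]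
theorem lyapunovMap_apply (C X : Matrix ι ι R) : lyapunovMap R C X = C * X + X * Cᵀ := rfl

theorem lyapunovMap_transpose (C X : Matrix ι ι R) :
    lyapunovMap R C Xᵀ = (lyapunovMap R C X)ᵀ := by
  simp only [lyapunovMap_apply, transpose_add, transpose_mul, transpose_transpose, add_comm]

theorem det_ne_zero_of_posDef_lyapunovMap [DecidableEq ι] {B T : Matrix ι ι ℝ}
    (hT : T.IsHermitian) (h : (lyapunovMap ℝ B T).PosDef) : T.det ≠ 0 := by
  intro hdet
  obtain ⟨x, hx, hTx⟩ := exists_mulVec_eq_zero_iff.mpr hdet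
  have hxT : x ᵥ* T = 0 := by
    rw [← mulVec_transpose, ← conjTranspose_eq_transpose_of_trivial, hT, hTx]
  have hpos := h.dotProduct_mulVec_pos hx
  rw [lyapunovMap_apply, add_mulVec, ← mulVec_mulVec, ← mulVec_mulVec, hTx, mulVec_zero,
    dotProduct_add, dotProduct_zero, star_trivial, dotProduct_mulVec x T, hxT, zero_dotProduct,
    add_zero] at hpos
  exact lt_irrefl 0 hpos

theorem lyapunovMap_injective [DecidableEq ι] {C : Matrix ι ι ℝ}
    (hC : ∀ μ ∈ spectrum ℂ (C.map Complex.ofReal), 0 < μ.re) :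
    Function.Injective (lyapunovMap ℝ C) := by
  set φ := (Complex.ofRealHom : ℝ →+* ℂ).mapMatrix (m := ι)
  have hdisj : Disjoint (spectrum ℂ (φ C)) (spectrum ℂ (-(φ C)ᵀ)) := by
    refine Set.disjoint_left.mpr fun μ hμ hμ' => ?_
    rw [← spectrum.neg_eq, Set.mem_neg, spectrum_transpose] at hμ'
    have h₁ := hC _ hμ
    have h₂ := hC _ hμ'
    rw [Complex.neg_re] at h₂
    linarith
  refine (injective_iff_map_eq_zero _).mpr fun X hX => ?_
  have hφX : φ C * φ X = φ X * -(φ C)ᵀ := by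
    have hT : φ Cᵀ = (φ C)ᵀ := transpose_map
    have := congrArg φ hX
    rwa [lyapunovMap_apply, map_add, map_mul, map_mul, map_zero, hT, ← eq_neg_iff_add_eq_zero,
      ← mul_neg] at this
  exact map_injective Complex.ofReal_injective
    (eq_zero_of_mul_eq_mul_of_disjoint_spectrum hdisj hφX)

end LyapunovMap

section Positivity

variable {ι : Type*} [Fintype ι]

theorem re_star_dotProduct_map_ofReal_mulVec (M : Matrix ι ι ℝ) (x : ι → ℂ) :
    (star x ⬝ᵥ M.map Complex.ofReal *ᵥ x).re =
      (fun i => (x i).re) ⬝ᵥ M *ᵥ (fun i => (x i).re) +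
        (fun i => (x i).im) ⬝ᵥ M *ᵥ (fun i => (x i).im) := by
  simp only [dotProduct, mulVec, Complex.re_sum, Finset.mul_sum, ← Finset.sum_add_distrib]
  refine Finset.sum_congr rfl fun i _ => Finset.sum_congr rfl fun j _ => ?_
  simp

theorem PosDef.map_ofReal {M : Matrix ι ι ℝ} (hM : M.PosDef) :
    (M.map Complex.ofReal).PosDef := by
  have hH : (M.map Complex.ofReal).IsHermitian := hM.isHermitian.map _ fun r => by simp
  refine .of_dotProduct_mulVec_pos hH fun x hx =>
    RCLike.pos_iff.mpr ⟨?_, hH.im_star_dotProduct_mulVec_self x⟩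
  have hpos : ∀ y : ι → ℝ, y ≠ 0 → 0 < y ⬝ᵥ M *ᵥ y := fun y hy => by
    simpa using hM.dotProduct_mulVec_pos hy
  have hnonneg : ∀ y : ι → ℝ, 0 ≤ y ⬝ᵥ M *ᵥ y := fun y => by
    simpa using hM.posSemidef.dotProduct_mulVec_nonneg y
  change 0 < (star x ⬝ᵥ M.map Complex.ofReal *ᵥ x).re
  rw [re_star_dotProduct_map_ofReal_mulVec]
  by_cases hre : (fun i => (x i).re) = 0
  · have him : (fun i => (x i).im) ≠ 0 := fun him =>
      hx (funext fun i => Complex.ext (congrFun hre i) (congrFun him i))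
    exact add_pos_of_nonneg_of_pos (hnonneg _) (hpos _ him)
  · exact add_pos_of_pos_of_nonneg (hpos _ hre) (hnonneg _)

theorem isOpen_setOf_forall_dotProduct_mulVec_pos :
    IsOpen {M : Matrix ι ι ℝ | ∀ x ≠ 0, 0 < x ⬝ᵥ M *ᵥ x} := by
  have hsphere : {M : Matrix ι ι ℝ | ∀ x ≠ 0, 0 < x ⬝ᵥ M *ᵥ x} =
      {M | ∀ x ∈ Metric.sphere (0 : ι → ℝ) 1, 0 < x ⬝ᵥ M *ᵥ x} := by
    ext M
    refine ⟨fun hM x hx => hM x (by rintro rfl; simp at hx), fun hM x hx => ?_⟩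
    have hu := hM (‖x‖⁻¹ • x) (mem_sphere_zero_iff_norm.2 (by
      rw [norm_smul, norm_inv, norm_norm, inv_mul_cancel₀ (norm_ne_zero_iff.2 hx)]))
    rw [smul_dotProduct, mulVec_smul, dotProduct_smul, smul_smul, smul_eq_mul] at hu
    exact pos_of_mul_pos_right hu (by positivity)
  rw [hsphere, isOpen_iff_eventually]
  intro M hM
  refine (isCompact_sphere (0 : ι → ℝ) 1).eventually_forall_of_forall_eventually fun x hx => ?_
  exact (continuousAt_const.eventually_lt (by fun_prop) (hM x hx) :
    ∀ᶠ p : Matrix ι ι ℝ × (ι → ℝ) in nhds (M, x), 0 < p.2 ⬝ᵥ p.1 *ᵥ p.2)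

theorem isClosed_setOf_forall_dotProduct_mulVec_nonneg :
    IsClosed {M : Matrix ι ι ℝ | ∀ x, 0 ≤ x ⬝ᵥ M *ᵥ x} := by
  simp only [ofPred_forall]
  exact isClosed_iInter fun x => isClosed_le continuous_const (by fun_prop)

theorem PosDef.of_isPreconnected [DecidableEq ι] {X : Type*} [TopologicalSpace X] {s : Set X}
    (hs : IsPreconnected s) {γ : X → Matrix ι ι ℝ} (hγ : ContinuousOn γ s)
    (hherm : ∀ t ∈ s, (γ t).IsHermitian) (hdet : ∀ t ∈ s, (γ t).det ≠ 0) {a b : X}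
    (ha : a ∈ s) (hb : b ∈ s) (hγa : (γ a).PosDef) : (γ b).PosDef := by
  set U := {M : Matrix ι ι ℝ | ∀ x ≠ 0, 0 < x ⬝ᵥ M *ᵥ x}
  have posDef_iff : ∀ t ∈ s, (γ t).PosDef ↔ γ t ∈ U := fun t ht =>
    ⟨fun h x hx => by simpa using h.dotProduct_mulVec_pos hx,
      fun h => .of_dotProduct_mulVec_pos (hherm t ht) fun x hx => by simpa using h x hx⟩
  have hclosure : closure U ⊆ {M | ∀ x, 0 ≤ x ⬝ᵥ M *ᵥ x} :=
    closure_minimal (fun M hM x => by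
      rcases eq_or_ne x 0 with rfl | hx
      · simp
      · exact (hM x hx).le) isClosed_setOf_forall_dotProduct_mulVec_nonneg
  have hsub : γ '' s ⊆ U := by
    refine (hs.image γ hγ).subset_of_closure_inter_subset
      isOpen_setOf_forall_dotProduct_mulVec_pos
      ⟨γ a, mem_image_of_mem γ ha, (posDef_iff a ha).1 hγa⟩ ?_
    rintro _ ⟨hM, t, ht, rfl⟩
    have hpsd : (γ t).PosSemidef := posSemidef_iff_dotProduct_mulVec.mpr
      ⟨hherm t ht, fun x => by simpa using hclosure hM x⟩
    exact (posDef_iff t ht).1 (hpsd.posDef_iff_det_ne_zero.2 (hdet t ht))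
  exact (posDef_iff b hb).2 (hsub (mem_image_of_mem γ hb))

end Positivity

section Lyapunov

variable {ι : Type*} [Fintype ι] [DecidableEq ι]

theorem re_pos_of_mem_spectrum_of_posDef {C P : Matrix ι ι ℂ} (hP : P.PosDef)
    (hQ : (P * Cᴴ + C * P).PosDef) {μ : ℂ} (hμ : μ ∈ spectrum ℂ C) : 0 < μ.re := by
  obtain ⟨w, hw0, hw⟩ : ∃ w ≠ 0, w ᵥ* (algebraMap ℂ _ μ - C) = 0 := by
    rw [spectrum.mem_iff, isUnit_iff_isUnit_det, isUnit_iff_ne_zero, not_not] at hμ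
    exact exists_vecMul_eq_zero_iff.mpr hμ
  obtain ⟨x, rfl⟩ : ∃ x, w = star x := ⟨star w, (star_star w).symm⟩
  have hxC : star x ᵥ* C = μ • star x := by
    rw [vecMul_sub, sub_eq_zero, Algebra.algebraMap_eq_smul_one, vecMul_smul, vecMul_one] at hw
    exact hw.symm
  have hx : x ≠ 0 := by simpa using hw0
  have hCx : Cᴴ *ᵥ x = star μ • x := by rw [← star_star x, ← star_vecMul, hxC, star_smul]
  have key : star x ⬝ᵥ (P * Cᴴ + C * P) *ᵥ x = ((2 * μ.re : ℝ) : ℂ) * (star x ⬝ᵥ P *ᵥ x) := by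
    rw [add_mulVec, ← mulVec_mulVec, ← mulVec_mulVec, hCx, dotProduct_add, dotProduct_mulVec _ C,
      hxC, mulVec_smul, dotProduct_smul, smul_dotProduct, smul_eq_mul, smul_eq_mul, ← add_mul,
      Complex.star_def, add_comm, Complex.add_conj]
  have hQx := hQ.re_dotProduct_pos hx
  rw [key, RCLike.re_to_complex, Complex.re_ofReal_mul] at hQx
  linarith [pos_of_mul_pos_left hQx (hP.re_dotProduct_pos hx).le]

section

attribute [local instance] Matrix.normedAddCommGroup Matrix.normedSpace

theorem exists_posDef_lyapunovMap_eq_one {B : Matrix ι ι ℝ}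
    (hB : ∀ μ ∈ spectrum ℂ (B.map Complex.ofReal), 0 < μ.re) :
    ∃ T : Matrix ι ι ℝ, T.PosDef ∧ lyapunovMap ℝ B T = 1 := by
  set C : ℝ → Matrix ι ι ℝ := fun t => (1 - t) • 1 + t • B
  have hC : ∀ t, (C t).map Complex.ofReal =
      algebraMap ℂ _ (1 - t) + (t : ℂ) • B.map Complex.ofReal := fun t => by
    ext i j
    rcases eq_or_ne i j with rfl | h <;> simp [C, algebraMap_matrix_apply, *]
  have hinj : ∀ t ∈ Icc (0 : ℝ) 1, Function.Injective (lyapunovMap ℝ (C t)) := fun t ht =>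
    lyapunovMap_injective fun μ hμ => spectrum.re_pos_of_mem_segment hB ht (by rwa [hC] at hμ)
  set L : Matrix ι ι ℝ →ₗ[ℝ] Matrix ι ι ℝ →L[ℝ] Matrix ι ι ℝ :=
    LinearMap.toContinuousLinearMap.toLinearMap ∘ₗ lyapunovMap ℝ
  have hL : Continuous fun t => L (C t) := L.continuous_of_finiteDimensional.comp (by fun_prop)
  have hunit : ∀ t ∈ Icc (0 : ℝ) 1, IsUnit (L (C t)) := fun t ht =>
    ContinuousLinearMap.isUnit_iff_bijective.2
      ⟨hinj t ht, LinearMap.injective_iff_surjective.1 (hinj t ht)⟩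
  obtain ⟨T, hTcont, hLT⟩ := exists_continuousOn_apply_eq hL.continuousOn hunit 1
  have hT : ∀ t ∈ Icc (0 : ℝ) 1, lyapunovMap ℝ (C t) (T t) = 1 := hLT
  have hherm : ∀ t ∈ Icc (0 : ℝ) 1, (T t).IsHermitian := fun t ht =>
    (conjTranspose_eq_transpose_of_trivial _).trans
      (hinj t ht (by rw [lyapunovMap_transpose, hT t ht, transpose_one]))
  have hdet : ∀ t ∈ Icc (0 : ℝ) 1, (T t).det ≠ 0 := fun t ht =>
    det_ne_zero_of_posDef_lyapunovMap (hherm t ht) (by rw [hT t ht]; exact PosDef.one)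
  have hT0 : (T 0).PosDef := by
    have h := hT 0 (left_mem_Icc.2 zero_le_one)
    simp only [C, sub_zero, one_smul, zero_smul, add_zero, lyapunovMap_apply, one_mul,
      transpose_one, mul_one] at h
    rw [show T 0 = (2⁻¹ : ℝ) • 1 by rw [← h, ← two_smul ℝ, smul_smul]; norm_num]
    exact PosDef.one.smul (by norm_num)
  refine ⟨T 1, PosDef.of_isPreconnected isPreconnected_Icc hTcont hherm hdet
    (left_mem_Icc.2 zero_le_one) (right_mem_Icc.2 zero_le_one) hT0, ?_⟩
  simpa [C] using hT 1 (right_mem_Icc.2 zero_le_one)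

end

theorem forall_re_pos_iff_exists_posDef_lyapunovMap (B : Matrix ι ι ℝ) :
    (∀ μ ∈ spectrum ℂ (B.map Complex.ofReal), 0 < μ.re) ↔
      ∃ T : Matrix ι ι ℝ, T.PosDef ∧ (lyapunovMap ℝ B T).PosDef := by
  refine ⟨fun hB => ?_, fun ⟨T, hT, hBT⟩ μ hμ => ?_⟩
  · obtain ⟨T, hT, hBT⟩ := exists_posDef_lyapunovMap_eq_one hB
    exact ⟨T, hT, hBT ▸ PosDef.one⟩
  · have hmap : (lyapunovMap ℝ B T).map Complex.ofReal =
        T.map Complex.ofReal * (B.map Complex.ofReal)ᴴ +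
          B.map Complex.ofReal * T.map Complex.ofReal := by
      ext i j
      simp [mul_apply, add_comm]
    exact re_pos_of_mem_spectrum_of_posDef hT.map_ofReal (hmap ▸ hBT.map_ofReal) hμ

end Lyapunov

end Matrix

/-- Lyapunov characterization of the half-plane LMI region: all eigenvalues of
`A` have real part greater than `ε` iff there is a symmetric positive definite
`T` with `TAᵀ + AT − 2εT` positive definite. -/
theorem halfplane_lyapunov_characterization (n : ℕ)
    (A : Matrix (Fin n) (Fin n) ℝ) (ε : ℝ) :
    (∀ μ ∈ spectrum ℂ (A.map (Complex.ofReal : ℝ → ℂ)), ε < μ.re) ↔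
      ∃ T : Matrix (Fin n) (Fin n) ℝ, T.PosDef ∧
        (T * Aᵀ + A * T - (2 * ε) • T).PosDef := by
  have hspec : spectrum ℂ ((A - ε • 1).map Complex.ofReal) =
      spectrum ℂ (A.map Complex.ofReal) - ({(ε : ℂ)} : Set ℂ) := by
    rw [spectrum.sub_singleton_eq]
    congr 1
    ext i j
    rcases eq_or_ne i j with rfl | h <;> simp [algebraMap_matrix_apply, *]
  have hlyap : ∀ T, lyapunovMap ℝ (A - ε • 1) T = T * Aᵀ + A * T - (2 * ε) • T := fun T => by
    simp only [lyapunovMap_apply, sub_mul, mul_sub, transpose_sub, transpose_smul, transpose_one,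
      Matrix.smul_mul, Matrix.mul_smul, one_mul, mul_one]
    module
  simp_rw [← hlyap, ← forall_re_pos_iff_exists_posDef_lyapunovMap, hspec, Set.sub_singleton,
    Set.forall_mem_image, Complex.sub_re, Complex.ofReal_re, sub_pos]
end

section
/- (Optimality of the Kalman gain.) Let P ∈ ℝ^{n×n} be symmetric positive semidefinite, R ∈ ℝ^{m×m} symmetric positive definite, and H ∈ ℝ^{m×n}. For N ∈ ℝ^{n×m} define the updated covariance J(N) := (I − N H) P (I − N H)ᵀ + N R Nᵀ. Then the Kalman gain N* := P Hᵀ (H P Hᵀ + R)^{−1} is well defined (H P Hᵀ + R is invertible) and minimizes the trace of the updated covariance: trace(J(N*)) ≤ trace(J(N)) for every N ∈ ℝ^{n×m}. -/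
/-!
Expanding `J(N)` gives a matrix quadratic `P - Bᵀ Nᵀ - N B + N S Nᵀ` in the gain, with
`B = H P` and `S = H P Hᵀ + R`. Completing the square around `N* = Bᵀ S⁻¹ = P Hᵀ S⁻¹` writes
`J(N) = J(N*) + (N - N*) S (N - N*)ᵀ`, and the second term has nonnegative trace because `S`,
the sum of a positive semidefinite and a positive definite matrix, is positive definite.
-/

open Matrix

/-- The updated covariance of the Kalman correction step with gain `N`:
`J(N) = (I − NH) P (I − NH)ᵀ + N R Nᵀ`. -/
def updatedCov {n m : ℕ} (P : Matrix (Fin n) (Fin n) ℝ)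
    (R : Matrix (Fin m) (Fin m) ℝ) (H : Matrix (Fin m) (Fin n) ℝ)
    (N : Matrix (Fin n) (Fin m) ℝ) : Matrix (Fin n) (Fin n) ℝ :=
  (1 - N * H) * P * (1 - N * H)ᵀ + N * R * Nᵀ

namespace Matrix

theorem complete_square {α : Type*} [CommRing α] {l m : Type*} [Fintype m] [DecidableEq m]
    (A : Matrix l l α) (B : Matrix m l α) {S : Matrix m m α} (hS : IsUnit S.det) (hSt : S.IsSymm)
    (N : Matrix l m α) :
    A - Bᵀ * Nᵀ - N * B + N * S * Nᵀ =
      A - Bᵀ * S⁻¹ * B + (N - Bᵀ * S⁻¹) * S * (N - Bᵀ * S⁻¹)ᵀ := by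
  have hSinvt : (S⁻¹)ᵀ = S⁻¹ := by rw [transpose_nonsing_inv, hSt.eq]
  simp only [transpose_sub, transpose_mul, transpose_transpose, hSinvt, Matrix.sub_mul,
    Matrix.mul_sub, Matrix.mul_assoc, mul_nonsing_inv_cancel_left S _ hS,
    nonsing_inv_mul_cancel_left S _ hS]
  abel

theorem PosSemidef.mul_mul_transpose_same {l m : Type*} [Fintype l] [Fintype m]
    {A : Matrix l l ℝ} (hA : A.PosSemidef) (B : Matrix m l ℝ) : (B * A * Bᵀ).PosSemidef := by
  simpa only [conjTranspose_eq_transpose_of_trivial] using hA.mul_mul_conjTranspose_same B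

end Matrix

section Kalman

variable {n m : ℕ} {P : Matrix (Fin n) (Fin n) ℝ} (R : Matrix (Fin m) (Fin m) ℝ)
  (H : Matrix (Fin m) (Fin n) ℝ)

theorem updatedCov_eq_quadratic (hP : P.IsSymm) (N : Matrix (Fin n) (Fin m) ℝ) :
    updatedCov P R H N = P - (H * P)ᵀ * Nᵀ - N * (H * P) + N * (H * P * Hᵀ + R) * Nᵀ := by
  simp only [updatedCov, transpose_sub, transpose_mul, transpose_one, hP.eq, Matrix.sub_mul,
    Matrix.mul_sub, Matrix.one_mul, Matrix.mul_one, Matrix.mul_add, Matrix.add_mul,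
    Matrix.mul_assoc]
  abel

theorem updatedCov_eq_kalman_add (hP : P.IsSymm) (hS : IsUnit (H * P * Hᵀ + R).det)
    (hSt : (H * P * Hᵀ + R).IsSymm) (N : Matrix (Fin n) (Fin m) ℝ) :
    updatedCov P R H N = updatedCov P R H (P * Hᵀ * (H * P * Hᵀ + R)⁻¹) +
      (N - P * Hᵀ * (H * P * Hᵀ + R)⁻¹) * (H * P * Hᵀ + R) *
        (N - P * Hᵀ * (H * P * Hᵀ + R)⁻¹)ᵀ := by
  have hPHt : P * Hᵀ = (H * P)ᵀ := by rw [transpose_mul, hP.eq]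
  simp only [updatedCov_eq_quadratic R H hP, complete_square P (H * P) hS hSt, hPHt, sub_self,
    Matrix.zero_mul, add_zero]

end Kalman

/-- Optimality of the Kalman gain: `H P Hᵀ + R` is invertible, and the gain
`N* = P Hᵀ (H P Hᵀ + R)⁻¹` minimizes the trace of the updated covariance. -/
theorem kalman_gain_optimal (n m : ℕ) (P : Matrix (Fin n) (Fin n) ℝ)
    (R : Matrix (Fin m) (Fin m) ℝ) (H : Matrix (Fin m) (Fin n) ℝ)
    (hP : P.PosSemidef) (hR : R.PosDef) :
    IsUnit (H * P * Hᵀ + R) ∧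
    ∀ N : Matrix (Fin n) (Fin m) ℝ,
      (updatedCov P R H (P * Hᵀ * (H * P * Hᵀ + R)⁻¹)).trace ≤
        (updatedCov P R H N).trace := by
  have hS : (H * P * Hᵀ + R).PosDef := PosDef.posSemidef_add (hP.mul_mul_transpose_same H) hR
  refine ⟨hS.isUnit, fun N => ?_⟩
  rw [updatedCov_eq_kalman_add R H (isHermitian_iff_isSymm.mp hP.isHermitian)
    ((isUnit_iff_isUnit_det _).mp hS.isUnit) (isHermitian_iff_isSymm.mp hS.isHermitian) N,
    trace_add]
  exact le_add_of_nonneg_right (hS.posSemidef.mul_mul_transpose_same _).trace_nonneg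
end
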